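/- arXiv:2504.10892 — 3 statements merged into one kernel-verified Lean document; each statement's English description precedes it below -/
import Mathlib

section
/- Let C ⊆ ℝ³ be a set invariant under the half rotation ρ_z about the z-axis, i.e. ρ_z '' C = C where ρ_z(x,y,z) = (-x,-y,z), and suppose C is disjoint from the z-axis {(0,0,t) | t ∈ ℝ}. Let D be the double-point set of the projection π_z(x,y,z) = (x,y) restricted to C, i.e. D = {q ∈ ℝ² | ∃ p₁, p₂ ∈ C, p₁ ≠ p₂ and π_z(p₁) = q and π_z(p₂) = q}. If D is finite, then the cardinality of D is even. -/
open Set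

noncomputable section

/-- Projection along the z-axis onto the x-y-plane. -/
def projZ : ℝ × ℝ × ℝ → ℝ × ℝ := fun p => (p.1, p.2.1)

/-- Projection along the y-axis onto the x-z-plane. -/
def projY : ℝ × ℝ × ℝ → ℝ × ℝ := fun p => (p.1, p.2.2)

/-- Projection along the x-axis onto the y-z-plane. -/
def projX : ℝ × ℝ × ℝ → ℝ × ℝ := fun p => (p.2.1, p.2.2)

/-- Half rotation about the x-axis. -/
def rotX : ℝ × ℝ × ℝ → ℝ × ℝ × ℝ := fun p => (p.1, -p.2.1, -p.2.2)

/-- Half rotation about the y-axis. -/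
def rotY : ℝ × ℝ × ℝ → ℝ × ℝ × ℝ := fun p => (-p.1, p.2.1, -p.2.2)

/-- Half rotation about the z-axis. -/
def rotZ : ℝ × ℝ × ℝ → ℝ × ℝ × ℝ := fun p => (-p.1, -p.2.1, p.2.2)

/-- The double-point set of a projection `π` restricted to `C`. -/
def doublePoints (π : ℝ × ℝ × ℝ → ℝ × ℝ) (C : Set (ℝ × ℝ × ℝ)) : Set (ℝ × ℝ) :=
  {q | ∃ p₁ ∈ C, ∃ p₂ ∈ C, p₁ ≠ p₂ ∧ π p₁ = q ∧ π p₂ = q}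

/-! `ρ_z` lies over the point reflection `q ↦ -q` of the plane, so it induces a fixed-point-free
involution of the double-point set: its only possible fixed point `0` is the image of the axis,
which `C` avoids. A finite set carrying a fixed-point-free involution has even cardinality. -/

theorem Function.Involutive.even_ncard {α : Type*} {f : α → α} (hf : Function.Involutive f)
    {s : Set α} (hs : s.Finite) (hmaps : MapsTo f s s) (hfree : ∀ x ∈ s, f x ≠ x) :
    Even s.ncard := by
  classical
  have := hs.fintype
  let σ : Equiv.Perm s :=
    Function.Involutive.toPerm (hmaps.restrict f s s) fun x => Subtype.ext (hf x)
  have hσ : σ ^ 2 = 1 := Equiv.ext (Function.Involutive.toPerm_involutive _)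
  have hsupport : σ.support = Finset.univ := by
    ext x
    simp only [Finset.mem_univ, iff_true, Equiv.Perm.mem_support, ne_eq, Subtype.ext_iff]
    exact hfree x x.2
  rw [← Nat.card_coe_set_eq, Nat.card_eq_fintype_card, ← Finset.card_univ, ← hsupport]
  exact even_iff_two_dvd.mpr (Equiv.Perm.two_dvd_card_support hσ)

theorem doublePoints_mapsTo {π : ℝ × ℝ × ℝ → ℝ × ℝ} {C : Set (ℝ × ℝ × ℝ)}
    {g : ℝ × ℝ × ℝ → ℝ × ℝ × ℝ} {h : ℝ × ℝ → ℝ × ℝ} (hg : g.Injective) (hgC : MapsTo g C C)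
    (hπ : ∀ p, π (g p) = h (π p)) : MapsTo h (doublePoints π C) (doublePoints π C) := by
  rintro q ⟨p₁, hp₁, p₂, hp₂, hne, rfl, hq⟩
  exact ⟨g p₁, hgC hp₁, g p₂, hgC hp₂, hg.ne hne, hπ p₁, by rw [hπ, hq]⟩

theorem rotZ_involutive : Function.Involutive rotZ := fun p => by
  simp [rotZ]

theorem projZ_rotZ (p : ℝ × ℝ × ℝ) : projZ (rotZ p) = -projZ p := rfl

theorem eq_of_projZ_eq_zero {p : ℝ × ℝ × ℝ} (hp : projZ p = 0) : p = (0, 0, p.2.2) := by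
  simp only [projZ, Prod.mk_eq_zero] at hp
  ext <;> simp [hp]

theorem even_crossings_of_period_two (C : Set (ℝ × ℝ × ℝ))
    (hsym : rotZ '' C = C)
    (haxis : C ∩ {p : ℝ × ℝ × ℝ | ∃ t : ℝ, p = (0, 0, t)} = ∅)
    (D : Set (ℝ × ℝ)) (hD : D = doublePoints projZ C) (hfin : D.Finite) :
    Even D.ncard := by
  subst hD
  have hmaps : MapsTo rotZ C C := fun _ hp => hsym.subset (mem_image_of_mem rotZ hp)
  refine neg_involutive.even_ncard hfin
    (doublePoints_mapsTo rotZ_involutive.injective hmaps projZ_rotZ) ?_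
  rintro _ ⟨p, hp, -, -, -, rfl, -⟩ hfix
  have hp_axis : p ∈ C ∩ {p | ∃ t : ℝ, p = (0, 0, t)} :=
    ⟨hp, _, eq_of_projZ_eq_zero (neg_eq_self.mp hfix)⟩
  simp [haxis] at hp_axis
end
end

section
/- Let C ⊆ ℝ³ be a set invariant under the half rotation ρ_x about the x-axis, i.e. ρ_x '' C = C where ρ_x(x,y,z) = (x,-y,-z), and suppose the intersection of C with the x-axis {(t,0,0) | t ∈ ℝ} consists of exactly two points. Let D be the double-point set of the projection π_x(x,y,z) = (y,z) restricted to C, i.e. D = {q ∈ ℝ² | ∃ p₁, p₂ ∈ C, p₁ ≠ p₂ and π_x(p₁) = q and π_x(p₂) = q}. If D is finite, then the cardinality of D is odd. -/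
open Set

noncomputable section

/-! The half rotation `rotX` is injective, preserves `C`, and lies over the negation `q ↦ -q` of
the plane under `projX`; hence the crossing set is invariant under negation. Negation is an
involution whose only fixed point is the origin, and the origin is a crossing since both axis
points project to it. All other crossings pair off, so their number is odd. -/

theorem Function.Involutive.card_modEq_card_fixedPoints {α : Type*} [Finite α] {f : α → α}
    (hf : Function.Involutive f) : Nat.card α ≡ Nat.card (Function.fixedPoints f) [MOD 2] := by
  classical
  have := Fintype.ofFinite α
  let σ : Function.End α := f
  have hsq : σ ^ 2 ^ 1 = 1 := funext hf
  simpa only [Nat.card_eq_fintype_card] using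
    Equiv.Perm.card_fixedPoints_modEq (p := 2) (n := 1) hsq

theorem Set.odd_ncard_of_neg_mem {G : Type*} [AddGroup G] [IsAddTorsionFree G] {s : Set G}
    (hs : s.Finite) (h0 : (0 : G) ∈ s) (hneg : MapsTo Neg.neg s s) : Odd s.ncard := by
  have := hs.to_subtype
  have hinv : Function.Involutive hneg.restrict := fun x => Subtype.ext (neg_neg (x : G))
  have hfix : Function.fixedPoints hneg.restrict = {⟨0, h0⟩} := by
    ext x
    simp only [Function.mem_fixedPoints, Function.IsFixedPt, Set.mem_singleton_iff,
      Subtype.ext_iff, MapsTo.val_restrict_apply, neg_eq_self]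
  have hmod := hinv.card_modEq_card_fixedPoints
  simp only [hfix, Nat.card_coe_set_eq, Set.ncard_singleton] at hmod
  exact Nat.odd_iff.mpr hmod

theorem mapsTo_doublePoints {π : ℝ × ℝ × ℝ → ℝ × ℝ} {C : Set (ℝ × ℝ × ℝ)}
    {g : ℝ × ℝ × ℝ → ℝ × ℝ × ℝ} {h : ℝ × ℝ → ℝ × ℝ} (hg : Function.Injective g)
    (hC : MapsTo g C C) (hπ : ∀ p, π (g p) = h (π p)) :
    MapsTo h (doublePoints π C) (doublePoints π C) := by
  rintro q ⟨p₁, hp₁, p₂, hp₂, hne, rfl, hq⟩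
  exact ⟨g p₁, hC hp₁, g p₂, hC hp₂, hg.ne hne, hπ p₁, by rw [hπ, hq]⟩

theorem rotX_involutive : Function.Involutive rotX := fun _ => by simp [rotX]

theorem projX_rotX (p : ℝ × ℝ × ℝ) : projX (rotX p) = -projX p := rfl

theorem odd_crossings_of_strong_inversion (C : Set (ℝ × ℝ × ℝ))
    (hsym : rotX '' C = C)
    (haxis : ∃ a b : ℝ × ℝ × ℝ, a ≠ b ∧
      C ∩ {p : ℝ × ℝ × ℝ | ∃ t : ℝ, p = (t, 0, 0)} = {a, b})
    (D : Set (ℝ × ℝ)) (hD : D = doublePoints projX C) (hfin : D.Finite) :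
    Odd D.ncard := by
  obtain ⟨a, b, hab, hset⟩ := haxis
  have hmem : ∀ p ∈ ({a, b} : Set (ℝ × ℝ × ℝ)), p ∈ C ∧ projX p = 0 := by
    rintro p hp
    obtain ⟨hpC, t, rfl⟩ := hset.symm ▸ hp
    exact ⟨hpC, rfl⟩
  obtain ⟨haC, ha0⟩ := hmem a (mem_insert a _)
  obtain ⟨hbC, hb0⟩ := hmem b (mem_insert_of_mem a rfl)
  have h0 : (0 : ℝ × ℝ) ∈ D := hD ▸ ⟨a, haC, b, hbC, hab, ha0, hb0⟩
  have hneg : MapsTo Neg.neg D D :=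
    hD ▸ mapsTo_doublePoints rotX_involutive.injective
      ((mapsTo_image rotX C).mono_right hsym.le) projX_rotX
  exact Set.odd_ncard_of_neg_mem hfin h0 hneg
end
end

section
/- Let C ⊆ ℝ³ be the closed polygon with the eight vertices P₁ = (4,0,0), P₂ = (3,3,-1), P₃ = (0,4,0), P₄ = (-3,3,1), P₅ = (-4,0,0), P₆ = (-3,-3,-1), P₇ = (0,-4,0), P₈ = (3,-3,1), taken cyclically. Then the projection π_z(x,y,z) = (x,y) is injective on C; in particular the double-point set of π_z restricted to C is empty. -/
open Set

noncomputable section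

theorem doublePoints_eq_empty_iff_injOn {π : ℝ × ℝ × ℝ → ℝ × ℝ} {C : Set (ℝ × ℝ × ℝ)} :
    doublePoints π C = ∅ ↔ InjOn π C := by
  simp only [eq_empty_iff_forall_notMem, doublePoints, mem_ofPred_eq, InjOn]
  constructor
  · intro h p₁ h₁ p₂ h₂ heq
    by_contra hne
    exact h _ ⟨p₁, h₁, p₂, h₂, hne, rfl, heq.symm⟩
  · rintro h q ⟨p₁, h₁, p₂, h₂, hne, rfl, heq⟩
    exact hne (h h₁ h₂ heq.symm)

theorem injOn_projZ_of_eq_height {C : Set (ℝ × ℝ × ℝ)} (h : ℝ × ℝ → ℝ)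
    (hC : ∀ p ∈ C, p.2.2 = h (projZ p)) : InjOn projZ C := by
  intro p hp q hq hpq
  obtain ⟨hx, hy⟩ := Prod.mk.inj hpq
  exact Prod.ext hx (Prod.ext hy (by rw [hC p hp, hC q hq, hpq]))

def octagonVertex : Fin 8 → ℝ × ℝ × ℝ :=
  ![(4, 0, 0), (3, 3, -1), (0, 4, 0), (-3, 3, 1),
    (-4, 0, 0), (-3, -3, -1), (0, -4, 0), (3, -3, 1)]

/-- On each edge of the octagon, `z` is a linear function of `x` or of `y`, chosen according to
which of the four strips `x ≥ 3`, `y ≥ 3`, `x ≤ -3`, `y ≤ -3` contains the edge's projection; the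
pieces agree at the corners `(±3, ±3)`. -/
def octagonHeight (q : ℝ × ℝ) : ℝ :=
  if 3 ≤ q.1 then -q.2 / 3
  else if 3 ≤ q.2 then -q.1 / 3
  else if q.1 ≤ -3 then q.2 / 3
  else if q.2 ≤ -3 then q.1 / 3
  else 0

theorem eq_octagonHeight_of_mem_edge (i : Fin 8) {p : ℝ × ℝ × ℝ}
    (hp : p ∈ segment ℝ (octagonVertex i) (octagonVertex (i + 1))) :
    p.2.2 = octagonHeight (projZ p) := by
  rw [segment_eq_image] at hp
  obtain ⟨t, ⟨ht₀, ht₁⟩, rfl⟩ := hp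
  fin_cases i <;>
    norm_num [octagonVertex, octagonHeight, projZ, Fin.add_def] <;>
    split_ifs <;> intros <;> linarith

theorem octagon_projZ_injective (V : Fin 8 → ℝ × ℝ × ℝ)
    (hV : V = ![(4, 0, 0), (3, 3, -1), (0, 4, 0), (-3, 3, 1),
                (-4, 0, 0), (-3, -3, -1), (0, -4, 0), (3, -3, 1)])
    (C : Set (ℝ × ℝ × ℝ))
    (hC : C = ⋃ i : Fin 8, segment ℝ (V i) (V (i + 1))) :
    Set.InjOn projZ C ∧ doublePoints projZ C = ∅ := by
  subst hV hC
  have hinj : InjOn projZ (⋃ i : Fin 8, segment ℝ (octagonVertex i) (octagonVertex (i + 1))) :=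
    injOn_projZ_of_eq_height octagonHeight fun p hp ↦ by
      obtain ⟨i, hi⟩ := mem_iUnion.1 hp
      exact eq_octagonHeight_of_mem_edge i hi
  exact ⟨hinj, doublePoints_eq_empty_iff_injOn.2 hinj⟩
end
end
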